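/- Let E be a real normed vector space, 𝒢, ℱ : E → E, u₀ ∈ E, N ≥ 1, and suppose ‖𝒢(x) − 𝒢(y)‖ ≤ γ‖x − y‖ and ‖(ℱ(x) − 𝒢(x)) − (ℱ(y) − 𝒢(y))‖ ≤ δ‖x − y‖ for all x, y ∈ E. Let U⁰ : ℕ → E satisfy U⁰(0) = u₀ and define the Parareal iterates for k ≥ 1 by U^k(0) = u₀ and U^k(n) = 𝒢(U^k(n−1)) + ℱ(U^{k−1}(n−1)) − 𝒢(U^{k−1}(n−1)) for n ≥ 1. Let U*(n) = ℱ^[n](u₀). Then for every k ≥ 1, the sup error over one iteration contracts by the factor β = δ · Σ_{i=0}^{N−1} γ^i; that is, max_{0 ≤ n ≤ N} ‖U^k(n) − U*(n)‖ ≤ δ · (Σ_{i=0}^{N−1} γ^i) · max_{0 ≤ n ≤ N} ‖U^{k−1}(n) − U*(n)‖. -/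

import Mathlib

/-!
Write `eₖ(n) = Uᵏ(n) - ℱ^[n] u₀`. Since `ℱ = 𝒢 + (ℱ - 𝒢)`, the Parareal update splits the new
error into a 𝒢-difference and an (ℱ - 𝒢)-difference, so
`‖eₖ₊₁(n+1)‖ ≤ γ ‖eₖ₊₁(n)‖ + δ ‖eₖ(n)‖ ≤ γ ‖eₖ₊₁(n)‖ + δ M` with `M` the sup of `‖eₖ‖`.
As `eₖ₊₁(0) = 0`, unrolling this linear recursion gives `‖eₖ₊₁(n)‖ ≤ δ M Σ_{i<n} γ^i`,
and the partial geometric sums increase with `n` up to `N`.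
-/

open Finset

theorem norm_parareal_update_sub_le {E : Type*} [SeminormedAddCommGroup E] {F G : E → E}
    {γ δ : ℝ} (hG : ∀ x y : E, ‖G x - G y‖ ≤ γ * ‖x - y‖)
    (hFG : ∀ x y : E, ‖(F x - G x) - (F y - G y)‖ ≤ δ * ‖x - y‖) (a b c : E) :
    ‖G a + F b - G b - F c‖ ≤ γ * ‖a - c‖ + δ * ‖b - c‖ :=
  calc ‖G a + F b - G b - F c‖ = ‖(G a - G c) + ((F b - G b) - (F c - G c))‖ := by
        congr 1; abel
    _ ≤ ‖G a - G c‖ + ‖(F b - G b) - (F c - G c)‖ := norm_add_le _ _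
    _ ≤ γ * ‖a - c‖ + δ * ‖b - c‖ := add_le_add (hG a c) (hFG b c)

theorem le_mul_geom_sum_of_le_mul_add {e : ℕ → ℝ} {γ c : ℝ} {N : ℕ} (hγ : 0 ≤ γ)
    (he₀ : e 0 ≤ 0) (hstep : ∀ n < N, e (n + 1) ≤ γ * e n + c) :
    ∀ n ≤ N, e n ≤ c * ∑ i ∈ range n, γ ^ i := by
  intro n hn
  induction n with
  | zero => simpa using he₀
  | succ n ih =>
    calc e (n + 1) ≤ γ * e n + c := hstep n hn
      _ ≤ γ * (c * ∑ i ∈ range n, γ ^ i) + c := by gcongr; exact ih (by omega)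
      _ = c * ∑ i ∈ range (n + 1), γ ^ i := by rw [geom_sum_succ]; ring

theorem parareal_sup_error_contraction_general
    {E : Type*} [NormedAddCommGroup E]
    (F G : E → E) (u₀ : E) (N : ℕ) (γ δ : ℝ)
    (hγ : 0 ≤ γ) (hδ : 0 ≤ δ)
    (hG : ∀ x y : E, ‖G x - G y‖ ≤ γ * ‖x - y‖)
    (hFG : ∀ x y : E, ‖(F x - G x) - (F y - G y)‖ ≤ δ * ‖x - y‖)
    (U : ℕ → ℕ → E)
    (h0 : ∀ k : ℕ, U k 0 = u₀)
    (hrec : ∀ k n : ℕ, U (k + 1) (n + 1) = G (U (k + 1) n) + F (U k n) - G (U k n)) :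
    ∀ k : ℕ,
      (Finset.range (N + 1)).sup' (Finset.nonempty_range_iff.mpr (Nat.succ_ne_zero N))
          (fun n => ‖U (k + 1) n - F^[n] u₀‖)
        ≤ δ * (∑ i ∈ Finset.range N, γ ^ i) *
          (Finset.range (N + 1)).sup' (Finset.nonempty_range_iff.mpr (Nat.succ_ne_zero N))
            (fun n => ‖U k n - F^[n] u₀‖) := by
  intro k
  set M := (range (N + 1)).sup' (nonempty_range_iff.mpr (Nat.succ_ne_zero N))
    (fun n => ‖U k n - F^[n] u₀‖)
  have hM : ∀ n ≤ N, ‖U k n - F^[n] u₀‖ ≤ M := fun n hn =>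
    le_sup' (fun n => ‖U k n - F^[n] u₀‖) (mem_range_succ_iff.mpr hn)
  have hM₀ : 0 ≤ M := (norm_nonneg _).trans (hM 0 N.zero_le)
  have hbound := le_mul_geom_sum_of_le_mul_add (e := fun n => ‖U (k + 1) n - F^[n] u₀‖)
    (c := δ * M) hγ (by simp [h0]) fun n hn => by
      rw [hrec, Function.iterate_succ_apply']
      exact (norm_parareal_update_sub_le hG hFG _ _ _).trans
        (by gcongr; exact hM n hn.le)
  refine sup'_le _ _ fun n hn => (hbound n (mem_range_succ_iff.mp hn)).trans ?_
  rw [mul_right_comm]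
  gcongr
  exact mem_range_succ_iff.mp hn

/-- Parareal contracts the sup error over the trajectory by the factor
`β = δ · Σ_{i=0}^{N-1} γ^i` at every iteration, where `γ` is the Lipschitz constant of
the coarse solver `𝒢` and `δ` that of the discrepancy `ℱ - 𝒢`. -/
theorem parareal_sup_error_contraction
    {E : Type*} [NormedAddCommGroup E] [NormedSpace ℝ E]
    (F G : E → E) (u₀ : E) (N : ℕ) (hN : 1 ≤ N) (γ δ : ℝ)
    (hγ : 0 ≤ γ) (hδ : 0 ≤ δ)
    (hG : ∀ x y : E, ‖G x - G y‖ ≤ γ * ‖x - y‖)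
    (hFG : ∀ x y : E, ‖(F x - G x) - (F y - G y)‖ ≤ δ * ‖x - y‖)
    (U : ℕ → ℕ → E)
    (h0 : ∀ k : ℕ, U k 0 = u₀)
    (hrec : ∀ k n : ℕ, U (k + 1) (n + 1) = G (U (k + 1) n) + F (U k n) - G (U k n)) :
    ∀ k : ℕ,
      (Finset.range (N + 1)).sup' (Finset.nonempty_range_iff.mpr (Nat.succ_ne_zero N))
          (fun n => ‖U (k + 1) n - F^[n] u₀‖)
        ≤ δ * (∑ i ∈ Finset.range N, γ ^ i) *
          (Finset.range (N + 1)).sup' (Finset.nonempty_range_iff.mpr (Nat.succ_ne_zero N))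
            (fun n => ‖U k n - F^[n] u₀‖) :=
  parareal_sup_error_contraction_general F G u₀ N γ δ hγ hδ hG hFG U h0 hrec
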